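/- Let U be an Edelman–Greene tableau of type (λ, w) and let i < j. If cell (x,y) lies in the i-th sweep of std(U) and cell (c,d) lies in the j-th sweep of std(U), then the label of (x,y) in U is strictly less than the label of (c,d) in U. -/

import Mathlib

open Equiv

/-- The simple transposition `sᵢ = (i, i+1)` in `S_∞` (realized as `Equiv.Perm ℕ`). -/
def EGs (i : ℕ) : Equiv.Perm ℕ := Equiv.swap i (i + 1)

/-- Coxeter length: the minimal length of a word in the simple transpositions for `w`. -/
noncomputable def coxLength (w : Equiv.Perm ℕ) : ℕ :=
  sInf {k | ∃ l : List ℕ, (l.map EGs).prod = w ∧ l.length = k}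

/-- `l` is a reduced word for `w`. -/
def IsReducedWord (w : Equiv.Perm ℕ) (l : List ℕ) : Prop :=
  (l.map EGs).prod = w ∧ l.length = coxLength w

/-- Top-to-bottom, right-to-left reading word of a filling of `μ`. -/
def readingWord (μ : YoungDiagram) (T : ℕ → ℕ → ℕ) : List ℕ :=
  (List.range (μ.colLen 0)).flatMap fun i =>
    ((List.range (μ.rowLen i)).reverse).map fun j => T i j

/-- Standard Young tableaux of shape `μ`, as entry functions: strictly increasing along
rows and columns, zero outside `μ`, and the labels on the cells are exactly `1,…,|μ|`. -/
def SYTset (μ : YoungDiagram) : Set (ℕ → ℕ → ℕ) :=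
  {T | (∀ i j1 j2, j1 < j2 → (i, j2) ∈ μ.cells → T i j1 < T i j2) ∧
       (∀ i1 i2 j, i1 < i2 → (i2, j) ∈ μ.cells → T i1 j < T i2 j) ∧
       (∀ i j, (i, j) ∉ μ.cells → T i j = 0) ∧
       μ.cells.image (fun c => T c.1 c.2) = Finset.Icc 1 μ.card}

/-- Edelman–Greene tableaux of type `(μ, w)`, as entry functions: strictly increasing
along rows and columns, zero outside `μ`, whose reading word is a reduced word of `w`. -/
def EGset (μ : YoungDiagram) (w : Equiv.Perm ℕ) : Set (ℕ → ℕ → ℕ) :=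
  {T | (∀ i j1 j2, j1 < j2 → (i, j2) ∈ μ.cells → T i j1 < T i j2) ∧
       (∀ i1 i2 j, i1 < i2 → (i2, j) ∈ μ.cells → T i1 j < T i2 j) ∧
       (∀ i j, (i, j) ∉ μ.cells → T i j = 0) ∧
       IsReducedWord w (readingWord μ T)}

/-- Standardization: the cell `(i,j)` receives the rank of its entry, where equal
entries are ordered left to right (by column). -/
def stdEntry (μ : YoungDiagram) (T : ℕ → ℕ → ℕ) (i j : ℕ) : ℕ :=
  if (i, j) ∈ μ.cells then
    (μ.cells.filter fun c =>
      T c.1 c.2 < T i j ∨ (T c.1 c.2 = T i j ∧ c.2 < j) ∨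
        (T c.1 c.2 = T i j ∧ c.2 = j ∧ c.1 ≤ i)).card
  else 0

/-- `k` is a descent of the standard tableau `U`: the cell labeled `k - 1` lies weakly
east of the cell labeled `k`. -/
def IsDescent (μ : YoungDiagram) (U : ℕ → ℕ → ℕ) (k : ℕ) : Prop :=
  ∃ c ∈ μ.cells, ∃ c' ∈ μ.cells, U c.1 c.2 = k ∧ U c'.1 c'.2 = k - 1 ∧ c.2 ≤ c'.2

open scoped Classical in
/-- The sweep map: a cell's entry is one plus the number of descents of `U` that are
at most its label in `U`. -/
noncomputable def sweepEntry (μ : YoungDiagram) (U : ℕ → ℕ → ℕ) (i j : ℕ) : ℕ :=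
  if (i, j) ∈ μ.cells then
    ((Finset.Icc 1 (U i j)).filter fun k => IsDescent μ U k).card + 1
  else 0

/-- `w` is totally commutative: it has a reduced word whose letters are pairwise
at distance at least `2`. -/
def TotallyCommutative (w : Equiv.Perm ℕ) : Prop :=
  ∃ l : List ℕ, IsReducedWord w l ∧ l.Pairwise fun a b => 2 ≤ Nat.dist a b

/-!
Standardization numbers the cells by (entry, column, row), so it is monotone in the entry and
the sweep number, being monotone in the standard label, is weakly monotone in the entry.
For equal entries the column strictness of `U` puts the cells in distinct columns, hence they
receive consecutive standard labels from west to east, no descent separates them, and they lie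
in the same sweep. Thus a smaller sweep forces a strictly smaller entry.
-/

open Finset

section Rank

variable {α β : Type*} [LinearOrder β] (s : Finset α) (f : α → β)

lemma card_filter_le_le_of_le {a b : α} (h : f a ≤ f b) :
    #{c ∈ s | f c ≤ f a} ≤ #{c ∈ s | f c ≤ f b} :=
  card_le_card <| monotone_filter_right s fun _ _ hc => hc.trans h

lemma card_filter_le_lt_of_lt {a b : α} (hb : b ∈ s) (h : f a < f b) :
    #{c ∈ s | f c ≤ f a} < #{c ∈ s | f c ≤ f b} := by
  refine card_lt_card <| (ssubset_iff_of_subset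
    (monotone_filter_right s fun _ _ hc => hc.trans h.le)).2 ⟨b, ?_, ?_⟩
  · exact mem_filter.2 ⟨hb, le_rfl⟩
  · simp only [mem_filter, not_and, not_le]
    exact fun _ => h

end Rank

def stdKey (U : ℕ → ℕ → ℕ) (e : ℕ × ℕ) : ℕ ×ₗ ℕ ×ₗ ℕ := toLex (U e.1 e.2, toLex (e.2, e.1))

section Standardization

variable {μ : YoungDiagram} {U : ℕ → ℕ → ℕ} {e f : ℕ × ℕ}

lemma stdKey_lt_of_lt (h : U e.1 e.2 < U f.1 f.2) : stdKey U e < stdKey U f :=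
  Prod.Lex.toLex_lt_toLex.2 (Or.inl h)

lemma stdEntry_eq_card (he : e ∈ μ.cells) :
    stdEntry μ U e.1 e.2 = #{c ∈ μ.cells | stdKey U c ≤ stdKey U e} := by
  rw [stdEntry, if_pos he]
  congr 1
  refine filter_congr fun c _ => ?_
  simp only [stdKey, Prod.Lex.toLex_le_toLex]
  omega

lemma stdEntry_le_of_stdKey_le (he : e ∈ μ.cells) (hf : f ∈ μ.cells)
    (h : stdKey U e ≤ stdKey U f) : stdEntry μ U e.1 e.2 ≤ stdEntry μ U f.1 f.2 := by
  rw [stdEntry_eq_card he, stdEntry_eq_card hf]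
  exact card_filter_le_le_of_le _ _ h

lemma stdEntry_lt_of_stdKey_lt (he : e ∈ μ.cells) (hf : f ∈ μ.cells)
    (h : stdKey U e < stdKey U f) : stdEntry μ U e.1 e.2 < stdEntry μ U f.1 f.2 := by
  rw [stdEntry_eq_card he, stdEntry_eq_card hf]
  exact card_filter_le_lt_of_lt _ _ hf h

lemma stdKey_lt_of_stdEntry_lt (he : e ∈ μ.cells) (hf : f ∈ μ.cells)
    (h : stdEntry μ U e.1 e.2 < stdEntry μ U f.1 f.2) : stdKey U e < stdKey U f :=
  lt_of_not_ge fun h' => h.not_ge (stdEntry_le_of_stdKey_le hf he h')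

lemma eq_of_stdEntry_mem_Icc {g : ℕ × ℕ} (he : e ∈ μ.cells) (hf : f ∈ μ.cells)
    (hg : g ∈ μ.cells) (hef : U e.1 e.2 = U f.1 f.2)
    (heg : stdEntry μ U e.1 e.2 ≤ stdEntry μ U g.1 g.2)
    (hgf : stdEntry μ U g.1 g.2 ≤ stdEntry μ U f.1 f.2) : U g.1 g.2 = U e.1 e.2 := by
  rcases lt_trichotomy (U g.1 g.2) (U e.1 e.2) with hlt | heq | hgt
  · exact absurd (stdEntry_lt_of_stdKey_lt hg he (stdKey_lt_of_lt hlt)) heg.not_gt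
  · exact heq
  · exact absurd (stdEntry_lt_of_stdKey_lt hf hg (stdKey_lt_of_lt (hef ▸ hgt))) hgf.not_gt

/-- Equal entries of a column-strict filling lie in distinct columns, so `stdEntry` numbers
them from west to east and no descent occurs among them. -/
lemma not_isDescent_stdEntry
    (hcol : ∀ i1 i2 j, i1 < i2 → (i2, j) ∈ μ.cells → U i1 j < U i2 j)
    (he : e ∈ μ.cells) (hf : f ∈ μ.cells) (hef : U e.1 e.2 = U f.1 f.2) {k : ℕ}
    (hek : stdEntry μ U e.1 e.2 < k) (hkf : k ≤ stdEntry μ U f.1 f.2) :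
    ¬IsDescent μ (stdEntry μ U) k := by
  rintro ⟨a, ha, b, hb, hak, hbk, hab⟩
  have hUa := eq_of_stdEntry_mem_Icc he hf ha hef (by omega) (by omega)
  have hUb := eq_of_stdEntry_mem_Icc he hf hb hef (by omega) (by omega)
  have hkey : stdKey U b < stdKey U a := stdKey_lt_of_stdEntry_lt hb ha (by omega)
  simp only [stdKey, Prod.Lex.toLex_lt_toLex] at hkey
  obtain hlt | ⟨-, hlt | ⟨hcol_eq, hrow⟩⟩ := hkey
  · omega
  · omega
  · have := hcol b.1 a.1 a.2 hrow ha
    rw [hcol_eq] at hUb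
    omega

end Standardization

section Sweep

variable {μ : YoungDiagram} {U : ℕ → ℕ → ℕ} {e f : ℕ × ℕ}

open scoped Classical

lemma sweepEntry_of_mem (V : ℕ → ℕ → ℕ) (he : e ∈ μ.cells) :
    sweepEntry μ V e.1 e.2 = #{k ∈ Icc 1 (V e.1 e.2) | IsDescent μ V k} + 1 :=
  if_pos he

lemma sweepEntry_le_of_le {V : ℕ → ℕ → ℕ} (he : e ∈ μ.cells) (hf : f ∈ μ.cells)
    (h : V e.1 e.2 ≤ V f.1 f.2) : sweepEntry μ V e.1 e.2 ≤ sweepEntry μ V f.1 f.2 := by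
  rw [sweepEntry_of_mem V he, sweepEntry_of_mem V hf]
  exact Nat.add_le_add_right (card_le_card (filter_subset_filter _ (Icc_subset_Icc_right h))) 1

lemma sweepEntry_eq_of_forall_not_isDescent {V : ℕ → ℕ → ℕ} (he : e ∈ μ.cells)
    (hf : f ∈ μ.cells) (hle : V e.1 e.2 ≤ V f.1 f.2)
    (h : ∀ k, V e.1 e.2 < k → k ≤ V f.1 f.2 → ¬IsDescent μ V k) :
    sweepEntry μ V e.1 e.2 = sweepEntry μ V f.1 f.2 := by
  rw [sweepEntry_of_mem V he, sweepEntry_of_mem V hf]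
  congr 2
  ext k
  simp only [mem_filter, mem_Icc]
  constructor
  · rintro ⟨⟨h1, h2⟩, hd⟩
    exact ⟨⟨h1, h2.trans hle⟩, hd⟩
  · rintro ⟨⟨h1, h2⟩, hd⟩
    exact ⟨⟨h1, not_lt.1 fun hlt => h k hlt h2 hd⟩, hd⟩

lemma sweepEntry_stdEntry_eq_of_eq
    (hcol : ∀ i1 i2 j, i1 < i2 → (i2, j) ∈ μ.cells → U i1 j < U i2 j)
    (he : e ∈ μ.cells) (hf : f ∈ μ.cells)
    (hef : U e.1 e.2 = U f.1 f.2) :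
    sweepEntry μ (stdEntry μ U) e.1 e.2 = sweepEntry μ (stdEntry μ U) f.1 f.2 := by
  wlog hle : stdEntry μ U e.1 e.2 ≤ stdEntry μ U f.1 f.2 generalizing e f
  · exact (this hf he hef.symm (le_of_not_ge hle)).symm
  exact sweepEntry_eq_of_forall_not_isDescent he hf hle fun k =>
    not_isDescent_stdEntry hcol he hf hef

lemma sweepEntry_stdEntry_le_of_le
    (hcol : ∀ i1 i2 j, i1 < i2 → (i2, j) ∈ μ.cells → U i1 j < U i2 j)
    (he : e ∈ μ.cells) (hf : f ∈ μ.cells)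
    (h : U e.1 e.2 ≤ U f.1 f.2) :
    sweepEntry μ (stdEntry μ U) e.1 e.2 ≤ sweepEntry μ (stdEntry μ U) f.1 f.2 := by
  obtain hlt | heq := h.lt_or_eq
  · exact sweepEntry_le_of_le he hf (stdEntry_lt_of_stdKey_lt he hf (stdKey_lt_of_lt hlt)).le
  · exact (sweepEntry_stdEntry_eq_of_eq hcol he hf heq).le

end Sweep

theorem stmt6 (μ : YoungDiagram) (w : Equiv.Perm ℕ) (U : ℕ → ℕ → ℕ)
    (hU : U ∈ EGset μ w) (i j : ℕ) (hij : i < j) (x y c d : ℕ)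
    (hxy : (x, y) ∈ μ.cells) (hcd : (c, d) ∈ μ.cells)
    (hi : sweepEntry μ (stdEntry μ U) x y = i)
    (hj : sweepEntry μ (stdEntry μ U) c d = j) :
    U x y < U c d := by
  by_contra! h
  have := sweepEntry_stdEntry_le_of_le hU.2.1 (e := (c, d)) (f := (x, y)) hcd hxy h
  dsimp only at this
  omega
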